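/- Fix a sequence of poles ξ_1, ξ_2, … in the open unit disk and fix n₁, n₂ ≥ 1. With z_r = e^{2πi(r−1)/N}, let Φ be the N×n₁ matrix with (r,k) entry z_r^{−(k−1)} and Ψ the N×n₂ matrix with (r,l) entry ψ_l(z_r), and let μ(Φ,Ψ) = max_{1≤k≤n₁, 1≤l≤n₂} |⟨Φ_k, Ψ_l⟩| / (‖Φ_k‖ ‖Ψ_l‖), where Φ_k, Ψ_l denote the k-th and l-th columns and ⟨·,·⟩, ‖·‖ are the complex Euclidean inner product and norm. Then μ(Φ,Ψ) converges, as N → ∞, to max_{1≤k≤n₁, 1≤l≤n₂} |a_{(k−1),l}|. -/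

import Mathlib

open Finset
open Filter Complex

/-- The Takenaka–Malmquist basis function ψ_{l+1} (0-indexed `l`), with poles
`ξ 0, ξ 1, …` (so `ξ j` is the paper's ξ_{j+1}). -/
noncomputable def TM (ξ : ℕ → ℂ) (l : ℕ) (z : ℂ) : ℂ :=
  ((Real.sqrt (1 - ‖ξ l‖ ^ 2) : ℂ) / (z - ξ l)) *
    ∏ j ∈ Finset.range l, (1 - (starRingEnd ℂ) (ξ j) * z) / (z - ξ j)

/-- The sample point z_{r+1} = e^{2πi r/N} (0-indexed `r`). -/
noncomputable def zroot (N r : ℕ) : ℂ :=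
  Complex.exp (2 * Real.pi * Complex.I * r / N)

/-- The mutual coherence μ(Φ, Ψ) of the N×n₁ FIR sample matrix Φ (columns
Φ_{k+1} = (z_r^{−k})_r, k < n₁) and the N×n₂ TM sample matrix Ψ (columns
Ψ_{l+1} = (ψ_{l+1}(z_r))_r, l < n₂): the maximum over columns of
|⟨Φ_k, Ψ_l⟩| / (‖Φ_k‖ ‖Ψ_l‖) for the complex Euclidean inner product and norm,
written as the supremum of the (finite, nonempty) set of these quotients. -/
noncomputable def sampleCoherence (ξ : ℕ → ℂ) (n₁ n₂ N : ℕ) : ℝ :=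
  sSup {x : ℝ | ∃ k < n₁, ∃ l < n₂,
    x = ‖∑ r ∈ Finset.range N,
          zroot N r ^ (-(k : ℤ)) * (starRingEnd ℂ) (TM ξ l (zroot N r))‖ /
        (Real.sqrt (∑ r ∈ Finset.range N, ‖zroot N r ^ (-(k : ℤ))‖ ^ 2) *
          Real.sqrt (∑ r ∈ Finset.range N, ‖TM ξ l (zroot N r)‖ ^ 2))}

lemma zroot_ne_zero (N r : ℕ) : zroot N r ≠ 0 := Complex.exp_ne_zero _

lemma abs_zroot (N r : ℕ) : ‖zroot N r‖ = 1 := by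
  have : (2 * Real.pi * Complex.I * r / N) = ((2 * Real.pi * r / N : ℝ) : ℂ) * Complex.I := by
    push_cast; ring
  rw [zroot, this, Complex.norm_exp_ofReal_mul_I]

lemma conj_zroot (N r : ℕ) : (starRingEnd ℂ) (zroot N r) = (zroot N r)⁻¹ := by
  rw [zroot, ← Complex.exp_conj, ← Complex.exp_neg]
  congr 1
  simp [map_div₀, Complex.conj_I, Complex.conj_ofReal, map_ofNat]
  ring

lemma zroot_pow_nat (N r : ℕ) (hN : 0 < N) : zroot N r ^ N = 1 := by
  have hNC : (N : ℂ) ≠ 0 := Nat.cast_ne_zero.mpr hN.ne'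
  rw [zroot, ← Complex.exp_nat_mul]
  have : (N : ℂ) * (2 * Real.pi * Complex.I * r / N) = (r : ℤ) * (2 * Real.pi * Complex.I) := by
    field_simp; norm_cast
  rw [this, Complex.exp_int_mul_two_pi_mul_I]

lemma zroot_zpow (N r : ℕ) (m : ℤ) :
    zroot N r ^ m = Complex.exp ((m : ℂ) * (2 * Real.pi * Complex.I) / N) ^ r := by
  rw [zroot, ← Complex.exp_int_mul, ← Complex.exp_nat_mul]
  congr 1
  ring

lemma sum_zroot_zpow (N : ℕ) (hN : 0 < N) (m : ℤ) :
    ∑ r ∈ range N, zroot N r ^ m = if (N : ℤ) ∣ m then (N : ℂ) else 0 := by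
  have hNC : (N : ℂ) ≠ 0 := Nat.cast_ne_zero.mpr hN.ne'
  have h2 : (2 * (Real.pi : ℂ) * Complex.I) ≠ 0 := by
    simp [Real.pi_ne_zero, Complex.I_ne_zero]
  set w : ℂ := Complex.exp ((m : ℂ) * (2 * Real.pi * Complex.I) / N) with hw
  have hsum : ∑ r ∈ range N, zroot N r ^ m = ∑ r ∈ range N, w ^ r :=
    Finset.sum_congr rfl fun r _ => zroot_zpow N r m
  have hwN : w ^ N = 1 := by
    rw [hw, ← Complex.exp_nat_mul]
    have : (N : ℂ) * ((m : ℂ) * (2 * Real.pi * Complex.I) / N) = (m : ℂ) * (2 * Real.pi * Complex.I) := by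
      field_simp
    rw [this, Complex.exp_int_mul_two_pi_mul_I]
  have hiff : w = 1 ↔ (N : ℤ) ∣ m := by
    rw [hw, Complex.exp_eq_one_iff]
    constructor
    · rintro ⟨n, hn⟩
      refine ⟨n, ?_⟩
      have h3 : (m : ℂ) * (2 * Real.pi * Complex.I) = ((N : ℂ) * n) * (2 * Real.pi * Complex.I) := by
        field_simp at hn
        linear_combination (2 * Real.pi * Complex.I) * hn
      have h4 : (m : ℂ) = (N : ℂ) * n := mul_right_cancel₀ h2 h3
      exact_mod_cast h4
    · rintro ⟨c, rfl⟩
      exact ⟨c, by push_cast; field_simp⟩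
  by_cases h : (N : ℤ) ∣ m
  · rw [hsum]
    simp [hiff.mpr h, h]
  · have hw1 : w ≠ 1 := fun hh => h (hiff.mp hh)
    rw [hsum, geom_sum_eq hw1, hwN]
    simp [h]


lemma abs_one_sub_conj_mul (z w : ℂ) (hz : ‖z‖ = 1) :
    ‖1 - (starRingEnd ℂ) w * z‖ = ‖z - w‖ := by
  have h1 : 1 - (starRingEnd ℂ) w * z = z * (starRingEnd ℂ) (z - w) := by
    have hz2 : z * (starRingEnd ℂ) z = 1 := by
      rw [Complex.mul_conj]
      norm_cast
      rw [← Complex.sq_norm, hz]; norm_num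
    rw [map_sub, mul_sub, hz2]; ring
  rw [h1, norm_mul, hz, Complex.norm_conj, one_mul]

lemma abs_TM (ξ : ℕ → ℂ) (hξ : ∀ j, ‖ξ j‖ < 1) (l : ℕ) (z : ℂ)
    (hz : ‖z‖ = 1) :
    ‖TM ξ l z‖ = Real.sqrt (1 - ‖ξ l‖ ^ 2) / ‖z - ξ l‖ := by
  have hne : ∀ j, z - ξ j ≠ 0 := by
    intro j h
    have h2 : z = ξ j := sub_eq_zero.mp h
    rw [h2] at hz
    exact absurd hz (ne_of_lt (hξ j))
  rw [TM, norm_mul, norm_div, norm_prod]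
  have hprod : ∏ j ∈ Finset.range l,
      ‖(1 - (starRingEnd ℂ) (ξ j) * z) / (z - ξ j)‖ = 1 := by
    apply Finset.prod_eq_one
    intro j _
    rw [norm_div, abs_one_sub_conj_mul z (ξ j) hz, div_self]
    exact norm_ne_zero_iff.mpr (hne j)
  rw [hprod, mul_one]
  congr 1
  rw [Complex.norm_real, Real.norm_eq_abs, _root_.abs_of_nonneg (Real.sqrt_nonneg _)]

lemma poisson_identity (z w : ℂ) (hz : ‖z‖ = 1) (hne : z - w ≠ 0) :
    (1 - ‖w‖ ^ 2) / ‖z - w‖ ^ 2 = 1 + 2 * (w / (z - w)).re := by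
  have hns' : 0 < Complex.normSq (z - w) := Complex.normSq_pos.mpr hne
  have h1 : ‖z - w‖ ^ 2 = Complex.normSq (z - w) := Complex.sq_norm _
  have h2 : ‖w‖ ^ 2 = Complex.normSq w := Complex.sq_norm _
  have hz2 : z.re ^ 2 + z.im ^ 2 = 1 := by
    have := Complex.sq_norm z
    rw [hz, Complex.normSq_apply] at this
    nlinarith [this]
  rw [h1, h2, Complex.div_re]
  rw [Complex.normSq_apply, Complex.normSq_apply, Complex.sub_re, Complex.sub_im]
  rw [Complex.normSq_apply, Complex.sub_re, Complex.sub_im] at hns'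
  have hD : (z.re - w.re) ^ 2 + (z.im - w.im) ^ 2 ≠ 0 := (by nlinarith [hns'] : (0:ℝ) < _).ne'
  field_simp
  nlinarith [hz2, hns']

lemma sum_inv_zroot_sub (N : ℕ) (hN : 0 < N) (w : ℂ) (hw : ‖w‖ < 1) :
    ∑ r ∈ range N, (zroot N r - w)⁻¹ = (N : ℂ) * w ^ (N - 1) / (1 - w ^ N) := by
  have hwN : w ^ N ≠ 1 := by
    intro h
    have : ‖w ^ N‖ < 1 := by
      rw [norm_pow]
      exact pow_lt_one₀ (norm_nonneg w) hw hN.ne'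
    rw [h] at this; simp at this
  have hden : (1 : ℂ) - w ^ N ≠ 0 := fun h => hwN (by linear_combination -h)
  have key : ∀ r ∈ range N, (zroot N r - w)⁻¹
      = (∑ j ∈ range N, zroot N r ^ j * w ^ (N - 1 - j)) / (1 - w ^ N) := by
    intro r _
    have hne : zroot N r - w ≠ 0 := by
      intro h
      have h2 : zroot N r = w := sub_eq_zero.mp h
      rw [← h2] at hw
      rw [abs_zroot] at hw
      exact lt_irrefl _ hw
    rw [eq_div_iff hden, inv_mul_eq_div, div_eq_iff hne]
    have := geom_sum₂_mul (zroot N r) w N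
    rw [zroot_pow_nat N r hN] at this
    exact this.symm
  rw [Finset.sum_congr rfl key, ← Finset.sum_div]
  congr 1
  rw [Finset.sum_comm]
  have inner : ∀ j ∈ range N, ∑ r ∈ range N, zroot N r ^ j * w ^ (N - 1 - j)
      = (if j = 0 then (N : ℂ) * w ^ (N - 1) else 0) := by
    intro j hj
    rw [← Finset.sum_mul]
    have : ∑ r ∈ range N, zroot N r ^ j = if j = 0 then (N : ℂ) else 0 := by
      have h := sum_zroot_zpow N hN (j : ℤ)
      simp only [zpow_natCast] at h
      rw [h]
      by_cases hj0 : j = 0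
      · simp [hj0]
      · have : ¬ ((N : ℤ) ∣ (j : ℤ)) := by
          rw [Int.natCast_dvd_natCast]
          intro hdvd
          have := Nat.le_of_dvd (Nat.pos_of_ne_zero hj0) hdvd
          have := Finset.mem_range.mp hj
          omega
        simp [this, hj0]
    rw [this]
    by_cases hj0 : j = 0
    · simp [hj0]
    · simp [hj0]
  rw [Finset.sum_congr rfl inner, Finset.sum_ite_eq' (range N) 0]
  simp [Finset.mem_range.mpr hN]

lemma T_formula (ξ : ℕ → ℂ) (hξ : ∀ j, ‖ξ j‖ < 1) (l N : ℕ) (hN : 0 < N) :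
    ∑ r ∈ range N, ‖TM ξ l (zroot N r)‖ ^ 2
      = (N : ℝ) * (1 + 2 * ((ξ l) ^ N / (1 - (ξ l) ^ N)).re) := by
  have hNC : (N : ℂ) ≠ 0 := Nat.cast_ne_zero.mpr hN.ne'
  have hne : ∀ r, zroot N r - ξ l ≠ 0 := by
    intro r h
    have h2 : zroot N r = ξ l := sub_eq_zero.mp h
    have := abs_zroot N r
    rw [h2] at this
    exact absurd this (ne_of_lt (hξ l))
  have point : ∀ r ∈ range N, ‖TM ξ l (zroot N r)‖ ^ 2
      = 1 + 2 * ((ξ l) / (zroot N r - ξ l)).re := by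
    intro r _
    rw [abs_TM ξ hξ l (zroot N r) (abs_zroot N r), div_pow,
      ← poisson_identity (zroot N r) (ξ l) (abs_zroot N r) (hne r)]
    congr 1
    rw [Real.sq_sqrt]
    nlinarith [hξ l, norm_nonneg (ξ l)]
  rw [Finset.sum_congr rfl point, Finset.sum_add_distrib]
  simp only [Finset.sum_const, Finset.card_range, nsmul_eq_mul, mul_one]
  rw [← Finset.mul_sum, ← Complex.re_sum]
  have : ∑ r ∈ range N, (ξ l) / (zroot N r - ξ l)
      = (N : ℂ) * ((ξ l) ^ N / (1 - (ξ l) ^ N)) := by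
    simp only [div_eq_mul_inv, ← Finset.mul_sum]
    rw [sum_inv_zroot_sub N hN (ξ l) (hξ l)]
    have hNsub : N - 1 + 1 = N := Nat.succ_pred_eq_of_pos hN
    have hxp : ξ l ^ N = ξ l ^ (N - 1) * ξ l := by rw [← pow_succ, hNsub]
    rw [hxp]
    ring
  rw [this]
  have : ((N : ℂ) * ((ξ l) ^ N / (1 - (ξ l) ^ N))).re = (N : ℝ) * ((ξ l) ^ N / (1 - (ξ l) ^ N)).re := by
    rw [Complex.mul_re]
    simp
  rw [this]
  ring

lemma coeff_bound (ξ : ℕ → ℂ) (hξ : ∀ j, ‖ξ j‖ < 1) (a : ℕ → ℕ → ℂ)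
    (ha : ∀ l : ℕ, ∀ z : ℂ, (∀ j ≤ l, ‖ξ j‖ < ‖z‖) →
      HasSum (fun d : ℕ => a d l * z ^ (-(d : ℤ))) (TM ξ l z)) (l : ℕ) :
    ∃ C : ℝ, 0 ≤ C ∧ ∃ ρ : ℝ, 0 < ρ ∧ ρ < 1 ∧ ∀ d : ℕ, ‖a d l‖ ≤ C * ρ ^ d := by
  set M : ℝ := (Finset.range (l + 1)).sup' ⟨l, by simp⟩ (fun j => ‖ξ j‖) with hM
  have hM1 : M < 1 := by
    rw [hM]
    refine (Finset.sup'_lt_iff _).mpr ?_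
    intro j _
    exact hξ j
  have hM0 : 0 ≤ M := by
    rw [hM]
    exact le_trans (norm_nonneg (ξ l))
      (Finset.le_sup' (fun j => ‖ξ j‖) (Finset.self_mem_range_succ l))
  set ρ : ℝ := (1 + M) / 2 with hρ
  have hρ0 : 0 < ρ := by rw [hρ]; linarith
  have hρ1 : ρ < 1 := by rw [hρ]; linarith
  have hMρ : M < ρ := by rw [hρ]; linarith
  have habs : ‖((ρ : ℝ) : ℂ)‖ = ρ := by
    rw [Complex.norm_real, Real.norm_eq_abs, _root_.abs_of_pos hρ0]
  have hHS := ha l ((ρ : ℝ) : ℂ) (by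
    intro j hj
    rw [habs]
    exact lt_of_le_of_lt (Finset.le_sup' (fun j => ‖ξ j‖)
      (Finset.mem_range.mpr (Nat.lt_succ_of_le hj))) hMρ)
  have htend : Filter.Tendsto (fun d : ℕ => a d l * ((ρ : ℝ) : ℂ) ^ (-(d : ℤ))) atTop (nhds 0) :=
    hHS.summable.tendsto_atTop_zero
  obtain ⟨C, hC⟩ := (htend.norm.bddAbove_range)
  refine ⟨C, ?_, ρ, hρ0, hρ1, ?_⟩
  · exact le_trans (norm_nonneg _) (hC ⟨0, rfl⟩)
  · intro d
    have h1 : ‖a d l * ((ρ : ℝ) : ℂ) ^ (-(d : ℤ))‖ ≤ C := hC ⟨d, rfl⟩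
    have h2 : ‖a d l * ((ρ : ℝ) : ℂ) ^ (-(d : ℤ))‖ = ‖a d l‖ * (ρ ^ d)⁻¹ := by
      rw [norm_mul]
      congr 1
      rw [norm_zpow]
      rw [Complex.norm_real, Real.norm_eq_abs, _root_.abs_of_pos hρ0]
      rw [zpow_neg, zpow_natCast]
    rw [h2] at h1
    have hpow : (0 : ℝ) < ρ ^ d := pow_pos hρ0 d
    calc ‖a d l‖ = ‖a d l‖ * (ρ ^ d)⁻¹ * ρ ^ d := by
          field_simp
      _ ≤ C * ρ ^ d := by
          apply mul_le_mul_of_nonneg_right h1 (le_of_lt hpow)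

lemma S_tendsto (ξ : ℕ → ℂ) (hξ : ∀ j, ‖ξ j‖ < 1) (a : ℕ → ℕ → ℂ)
    (ha : ∀ l : ℕ, ∀ z : ℂ, (∀ j ≤ l, ‖ξ j‖ < ‖z‖) →
      HasSum (fun d : ℕ => a d l * z ^ (-(d : ℤ))) (TM ξ l z)) (k l : ℕ) :
    Filter.Tendsto (fun N : ℕ =>
        (∑ r ∈ range N, zroot N r ^ (-(k : ℤ)) * (starRingEnd ℂ) (TM ξ l (zroot N r))) / (N : ℂ))
      atTop (nhds ((starRingEnd ℂ) (a k l))) := by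
  obtain ⟨C, hC0, ρ, hρ0, hρ1, hbound⟩ := coeff_bound ξ hξ a ha l
  rw [tendsto_iff_norm_sub_tendsto_zero]
  refine squeeze_zero' (g := fun N => (C * (1 - ρ)⁻¹) * ρ ^ N)
    (Filter.Eventually.of_forall fun N => norm_nonneg _) ?_ ?_
  · filter_upwards [Filter.eventually_gt_atTop k] with N hk
    have hN : 0 < N := Nat.lt_of_le_of_lt (Nat.zero_le k) hk
    have hNC : (N : ℂ) ≠ 0 := Nat.cast_ne_zero.mpr hN.ne'
    set S : ℂ := ∑ r ∈ range N, zroot N r ^ (-(k : ℤ)) * (starRingEnd ℂ) (TM ξ l (zroot N r)) with hS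
    -- HasSum for each r
    have hHSr : ∀ r ∈ range N, HasSum
        (fun d : ℕ => zroot N r ^ (-(k : ℤ)) * (starRingEnd ℂ) (a d l * zroot N r ^ (-(d : ℤ))))
        (zroot N r ^ (-(k : ℤ)) * (starRingEnd ℂ) (TM ξ l (zroot N r))) := by
      intro r _
      have h1 := ha l (zroot N r) (fun j _ => by rw [abs_zroot]; exact hξ j)
      exact (h1.star).mul_left _
    have hsum : HasSum
        (fun d : ℕ => ∑ r ∈ range N, zroot N r ^ (-(k : ℤ)) * (starRingEnd ℂ) (a d l * zroot N r ^ (-(d : ℤ)))) S :=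
      hasSum_sum hHSr
    have hfun : (fun d : ℕ => ∑ r ∈ range N, zroot N r ^ (-(k : ℤ)) * (starRingEnd ℂ) (a d l * zroot N r ^ (-(d : ℤ))))
        = fun d : ℕ => (starRingEnd ℂ) (a d l) * (if (N : ℤ) ∣ ((d : ℤ) - k) then (N : ℂ) else 0) := by
      funext d
      have step : ∀ r ∈ range N,
          zroot N r ^ (-(k : ℤ)) * (starRingEnd ℂ) (a d l * zroot N r ^ (-(d : ℤ)))
            = (starRingEnd ℂ) (a d l) * zroot N r ^ ((d : ℤ) - k) := by
        intro r _
        rw [map_mul, map_zpow₀, conj_zroot, inv_zpow, ← zpow_neg, neg_neg,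
          mul_comm (zroot N r ^ (-(k:ℤ))), mul_assoc, ← zpow_add₀ (zroot_ne_zero N r),
          ← sub_eq_add_neg]
      rw [Finset.sum_congr rfl step, ← Finset.mul_sum, sum_zroot_zpow N hN ((d : ℤ) - k)]
    rw [hfun] at hsum
    have hdiv : HasSum (fun d : ℕ => (starRingEnd ℂ) (a d l) * (if (N : ℤ) ∣ ((d : ℤ) - k) then (N : ℂ) else 0) / N)
        (S / N) := hsum.div_const N
    have hone : HasSum (fun d : ℕ => if d = k then (starRingEnd ℂ) (a k l) else 0)
        ((starRingEnd ℂ) (a k l)) := hasSum_ite_eq k _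
    have hh : HasSum (fun d : ℕ =>
        (starRingEnd ℂ) (a d l) * (if (N : ℤ) ∣ ((d : ℤ) - k) then (N : ℂ) else 0) / N
          - (if d = k then (starRingEnd ℂ) (a k l) else 0))
        (S / N - (starRingEnd ℂ) (a k l)) := hdiv.sub hone
    set h : ℕ → ℂ := fun d =>
        (starRingEnd ℂ) (a d l) * (if (N : ℤ) ∣ ((d : ℤ) - k) then (N : ℂ) else 0) / N
          - (if d = k then (starRingEnd ℂ) (a k l) else 0) with hhdef
    -- values of h
    have hdvd_iff : ∀ d : ℕ, d < N → ((N : ℤ) ∣ ((d : ℤ) - k)) → d = k := by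
      intro d hdN hdvd
      rcases hdvd with ⟨c, hc⟩
      have hNk : (k : ℤ) < N := by exact_mod_cast hk
      have hdN' : (d : ℤ) < N := by exact_mod_cast hdN
      have hd0 : (0 : ℤ) ≤ d := Int.natCast_nonneg d
      have hk0 : (0 : ℤ) ≤ k := Int.natCast_nonneg k
      have hN0 : (0 : ℤ) < N := by exact_mod_cast hN
      have hc0 : c = 0 := by
        by_contra h0
        rcases lt_or_gt_of_ne h0 with h1 | h1
        · have h2 : c ≤ -1 := by omega
          nlinarith
        · have h2 : 1 ≤ c := by omega
          nlinarith
      rw [hc0, mul_zero, sub_eq_zero] at hc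
      exact_mod_cast hc
    have hzero : ∀ d < N, h d = 0 := by
      intro d hdN
      by_cases hdk : d = k
      · subst hdk
        simp only [hhdef, sub_self, if_pos (dvd_zero ((N : ℤ))), if_pos rfl, if_pos trivial]
        field_simp; simp
      · simp only [hhdef, if_neg (fun hdvd => hdk (hdvd_iff d hdN hdvd)), if_neg hdk]
        simp
    have hbnd : ∀ d : ℕ, ‖h d‖ ≤ C * ρ ^ d := by
      intro d
      by_cases hdN : d < N
      · rw [hzero d hdN, norm_zero]
        positivity
      · have hdk : d ≠ k := by omega
        simp only [hhdef, if_neg hdk, sub_zero]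
        by_cases hdvd : (N : ℤ) ∣ ((d : ℤ) - k)
        · rw [if_pos hdvd, mul_div_assoc, div_self hNC, mul_one]
          have hnc : ‖(starRingEnd ℂ) (a d l)‖ = ‖a d l‖ := by
            simp
          rw [hnc]
          exact hbound d
        · rw [if_neg hdvd]
          simp only [mul_zero, zero_div, norm_zero]
          positivity
    have hsummable : Summable (fun d : ℕ => ‖h d‖) :=
      Summable.of_nonneg_of_le (fun d => norm_nonneg _) hbnd
        ((summable_geometric_of_lt_one hρ0.le hρ1).mul_left C)
    have h1 : ‖S / N - (starRingEnd ℂ) (a k l)‖ ≤ ∑' d : ℕ, ‖h d‖ := by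
      rw [← hh.tsum_eq]
      exact norm_tsum_le_tsum_norm hsummable
    have h2 : ∑' d : ℕ, ‖h d‖ = ∑' d : ℕ, ‖h (d + N)‖ := by
      rw [← hsummable.sum_add_tsum_nat_add N]
      rw [Finset.sum_eq_zero (fun d hd => by rw [hzero d (Finset.mem_range.mp hd), norm_zero]), zero_add]
    have h3 : ∑' d : ℕ, ‖h (d + N)‖ ≤ ∑' d : ℕ, (C * ρ ^ N) * ρ ^ d := by
      apply Summable.tsum_le_tsum
      · intro d
        calc ‖h (d + N)‖ ≤ C * ρ ^ (d + N) := hbnd (d + N)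
          _ = (C * ρ ^ N) * ρ ^ d := by rw [pow_add]; ring
      · exact (summable_nat_add_iff N).mpr hsummable
      · exact (summable_geometric_of_lt_one hρ0.le hρ1).mul_left _
    have h4 : ∑' d : ℕ, (C * ρ ^ N) * ρ ^ d = (C * (1 - ρ)⁻¹) * ρ ^ N := by
      rw [tsum_mul_left, tsum_geometric_of_lt_one hρ0.le hρ1]
      ring
    calc ‖S / N - (starRingEnd ℂ) (a k l)‖ ≤ ∑' d : ℕ, ‖h d‖ := h1
      _ = ∑' d : ℕ, ‖h (d + N)‖ := h2
      _ ≤ ∑' d : ℕ, (C * ρ ^ N) * ρ ^ d := h3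
      _ = (C * (1 - ρ)⁻¹) * ρ ^ N := h4
  · have := tendsto_pow_atTop_nhds_zero_of_lt_one hρ0.le hρ1
    have h5 := this.const_mul (C * (1 - ρ)⁻¹)
    simpa using h5

noncomputable def Fkl (ξ : ℕ → ℂ) (k l N : ℕ) : ℝ :=
  ‖∑ r ∈ Finset.range N,
      zroot N r ^ (-(k : ℤ)) * (starRingEnd ℂ) (TM ξ l (zroot N r))‖ /
    (Real.sqrt (∑ r ∈ Finset.range N, ‖zroot N r ^ (-(k : ℤ))‖ ^ 2) *
      Real.sqrt (∑ r ∈ Finset.range N, ‖TM ξ l (zroot N r)‖ ^ 2))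

lemma F_tendsto (ξ : ℕ → ℂ) (hξ : ∀ j, ‖ξ j‖ < 1) (a : ℕ → ℕ → ℂ)
    (ha : ∀ l : ℕ, ∀ z : ℂ, (∀ j ≤ l, ‖ξ j‖ < ‖z‖) →
      HasSum (fun d : ℕ => a d l * z ^ (-(d : ℤ))) (TM ξ l z)) (k l : ℕ) :
    Filter.Tendsto (fun N : ℕ => Fkl ξ k l N) atTop (nhds (‖a k l‖)) := by
  set c : ℕ → ℝ := fun N => 1 + 2 * ((ξ l) ^ N / (1 - (ξ l) ^ N)).re with hc
  have hpow : Filter.Tendsto (fun N : ℕ => (ξ l) ^ N) atTop (nhds 0) := by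
    apply tendsto_pow_atTop_nhds_zero_of_norm_lt_one
    exact hξ l
  have hden : Filter.Tendsto (fun N : ℕ => (1 : ℂ) - (ξ l) ^ N) atTop (nhds 1) := by
    have := tendsto_const_nhds (x := (1 : ℂ)) (f := atTop (α := ℕ)) |>.sub hpow
    simpa using this
  have hfrac : Filter.Tendsto (fun N : ℕ => (ξ l) ^ N / (1 - (ξ l) ^ N)) atTop (nhds 0) := by
    have := hpow.div hden one_ne_zero
    rw [div_one] at this
    exact this
  have hc_tend : Filter.Tendsto c atTop (nhds 1) := by
    have hre : Filter.Tendsto (fun N : ℕ => ((ξ l) ^ N / (1 - (ξ l) ^ N)).re) atTop (nhds 0) := by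
      have := (Complex.continuous_re.tendsto 0).comp hfrac
      simpa [Function.comp_def] using this
    have := (tendsto_const_nhds (x := (1 : ℝ)) (f := atTop (α := ℕ))).add (hre.const_mul 2)
    simpa using this
  have hS := S_tendsto ξ hξ a ha k l
  have habs : Filter.Tendsto (fun N : ℕ => ‖(∑ r ∈ range N, zroot N r ^ (-(k : ℤ)) * (starRingEnd ℂ) (TM ξ l (zroot N r))) / (N : ℂ)‖)
      atTop (nhds (‖a k l‖)) := by
    have h2 := (continuous_norm.tendsto _).comp hS
    rw [Complex.norm_conj] at h2
    exact h2
  have hsqrt : Filter.Tendsto (fun N : ℕ => Real.sqrt (c N)) atTop (nhds 1) := by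
    have := (Real.continuous_sqrt.tendsto 1).comp hc_tend
    simpa [Function.comp_def] using this
  have hmain := habs.div hsqrt one_ne_zero
  rw [div_one] at hmain
  apply hmain.congr'
  filter_upwards [Filter.eventually_gt_atTop 0] with N hN
  have hNR : (0 : ℝ) < N := by exact_mod_cast hN
  have hNC : (N : ℂ) ≠ 0 := Nat.cast_ne_zero.mpr hN.ne'
  -- Phi column norm
  have hPhi : ∑ r ∈ Finset.range N, ‖zroot N r ^ (-(k : ℤ))‖ ^ 2 = (N : ℝ) := by
    rw [Finset.sum_congr rfl (fun r _ => by
      rw [norm_zpow, abs_zroot, one_zpow, one_pow])]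
    simp
  have hT := T_formula ξ hξ l N hN
  have hcN0 : 0 ≤ c N := by
    have h0 : 0 ≤ (N : ℝ) * c N := by
      rw [← hT]
      exact Finset.sum_nonneg fun r _ => sq_nonneg _
    nlinarith
  rw [Fkl, hPhi, hT]
  rw [Real.sqrt_mul (le_of_lt hNR), ← mul_assoc, Real.mul_self_sqrt (le_of_lt hNR)]
  rw [Pi.div_apply, norm_div, Complex.norm_natCast, div_div]

lemma tendsto_finset_sup' {ι : Type*} (s : Finset ι) (hs : s.Nonempty) (f : ι → ℕ → ℝ) (L : ι → ℝ)
    (hf : ∀ i ∈ s, Filter.Tendsto (f i) Filter.atTop (nhds (L i))) :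
    Filter.Tendsto (fun N => s.sup' hs (fun i => f i N)) Filter.atTop (nhds (s.sup' hs L)) := by
  revert hf
  induction hs using Finset.Nonempty.cons_induction with
  | singleton a => intro hf; simpa using hf a (by simp)
  | cons a s ha hs' ih =>
    intro hf
    simp only [Finset.sup'_cons hs']
    exact (hf a (Finset.mem_cons_self a s)).max
      (ih (fun i hi => hf i (Finset.mem_cons.mpr (Or.inr hi))))

lemma sSup_pair_set (f : ℕ → ℕ → ℝ) (n₁ n₂ : ℕ) (h1 : 1 ≤ n₁) (h2 : 1 ≤ n₂) :
    sSup {x : ℝ | ∃ k < n₁, ∃ l < n₂, x = f k l}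
      = (Finset.range n₁ ×ˢ Finset.range n₂).sup'
          (Finset.Nonempty.product ⟨0, Finset.mem_range.mpr h1⟩ ⟨0, Finset.mem_range.mpr h2⟩)
          (fun p => f p.1 p.2) := by
  have hP : (Finset.range n₁ ×ˢ Finset.range n₂).Nonempty :=
    Finset.Nonempty.product ⟨0, Finset.mem_range.mpr h1⟩ ⟨0, Finset.mem_range.mpr h2⟩
  have hset : {x : ℝ | ∃ k < n₁, ∃ l < n₂, x = f k l}
      = ↑((Finset.range n₁ ×ˢ Finset.range n₂).image (fun p => f p.1 p.2)) := by
    ext x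
    simp only [Set.mem_setOf_eq, Finset.coe_image, Set.mem_image, Finset.mem_coe,
      Finset.mem_product, Finset.mem_range]
    constructor
    · rintro ⟨k, hk, l, hl, rfl⟩
      exact ⟨(k, l), ⟨hk, hl⟩, rfl⟩
    · rintro ⟨⟨k, l⟩, ⟨hk, hl⟩, rfl⟩
      exact ⟨k, hk, l, hl, rfl⟩
  rw [hset]
  rw [Finset.Nonempty.csSup_eq_max' (hP.image _), Finset.max'_eq_sup', Finset.sup'_image]
  rfl

/-- With `a d l` the impulse-response (Laurent) coefficients of the TM
basis functions (hypothesis `ha`), the mutual coherence μ(Φ, Ψ) of the sample matrices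
converges, as N → ∞, to max_{k < n₁, l < n₂} |a_{k,l}| (the paper's
max_{1≤k≤n₁,1≤l≤n₂} |a_{(k−1),l}|). -/
theorem sample_coherence_tendsto (ξ : ℕ → ℂ) (hξ : ∀ j, ‖ξ j‖ < 1)
    (a : ℕ → ℕ → ℂ)
    (ha : ∀ l : ℕ, ∀ z : ℂ, (∀ j ≤ l, ‖ξ j‖ < ‖z‖) →
      HasSum (fun d : ℕ => a d l * z ^ (-(d : ℤ))) (TM ξ l z))
    (n₁ n₂ : ℕ) (hn₁ : 1 ≤ n₁) (hn₂ : 1 ≤ n₂) :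
    Filter.Tendsto (fun N : ℕ => sampleCoherence ξ n₁ n₂ N) Filter.atTop
      (nhds (sSup {x : ℝ | ∃ k < n₁, ∃ l < n₂, x = ‖a k l‖})) := by
  have hP : (Finset.range n₁ ×ˢ Finset.range n₂).Nonempty :=
    Finset.Nonempty.product ⟨0, Finset.mem_range.mpr hn₁⟩ ⟨0, Finset.mem_range.mpr hn₂⟩
  have hlim : sSup {x : ℝ | ∃ k < n₁, ∃ l < n₂, x = ‖a k l‖}
      = (Finset.range n₁ ×ˢ Finset.range n₂).sup' hP (fun p => ‖a p.1 p.2‖) := by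
    rw [sSup_pair_set (fun k l => ‖a k l‖) n₁ n₂ hn₁ hn₂]
  have hval : ∀ N, sampleCoherence ξ n₁ n₂ N
      = (Finset.range n₁ ×ˢ Finset.range n₂).sup' hP (fun p => Fkl ξ p.1 p.2 N) := by
    intro N
    exact sSup_pair_set (fun k l => Fkl ξ k l N) n₁ n₂ hn₁ hn₂
  rw [hlim]
  rw [show (fun N : ℕ => sampleCoherence ξ n₁ n₂ N)
    = fun N => (Finset.range n₁ ×ˢ Finset.range n₂).sup' hP (fun p => Fkl ξ p.1 p.2 N)
    from funext hval]
  exact tendsto_finset_sup' _ hP (fun p => Fkl ξ p.1 p.2) (fun p => ‖a p.1 p.2‖)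
    (fun p _ => F_tendsto ξ hξ a ha p.1 p.2)
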